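/- arXiv:math/9809209 — 2 statements merged into one kernel-verified Lean document; each statement's English description precedes it below -/
import Mathlib

section
/- Let p be an odd prime, G = GL₂(𝔽_p), B the upper triangular Borel, and N the normalizer of the diagonal torus. Then in ℤ[N\G/N], the operator NB × BN equals 2·N + Nσ₀N, where σ₀ = [[1,1],[1,0]]. -/
open Matrix Pointwise
open scoped Classical

noncomputable section

abbrev GL2 (p : ℕ) := GL (Fin 2) (ZMod p)

namespace Chen

variable (p : ℕ)

/-- The Borel subgroup of upper triangular matrices in `GL₂(𝔽_p)`. -/
def Bor : Subgroup (GL2 p) where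
  carrier := {g | (g : Matrix (Fin 2) (Fin 2) (ZMod p)) 1 0 = 0}
  one_mem' := by
    show ((1 : GL2 p) : Matrix (Fin 2) (Fin 2) (ZMod p)) 1 0 = 0
    simp [Matrix.one_apply]
  mul_mem' := by
    intro a b ha hb
    show ((a * b : GL2 p) : Matrix (Fin 2) (Fin 2) (ZMod p)) 1 0 = 0
    simp only [Set.mem_setOf_eq] at ha hb
    rw [Units.val_mul, Matrix.mul_apply, Fin.sum_univ_two, ha, hb]
    ring
  inv_mem' := by
    intro a ha
    show ((a⁻¹ : GL2 p) : Matrix (Fin 2) (Fin 2) (ZMod p)) 1 0 = 0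
    simp only [Set.mem_setOf_eq] at ha
    rw [Matrix.coe_units_inv, Matrix.inv_def]
    simp [Matrix.adjugate_fin_two, ha]

/-- The split (diagonal) Cartan subgroup of `GL₂(𝔽_p)`. -/
def Cs : Subgroup (GL2 p) where
  carrier := {g | (g : Matrix (Fin 2) (Fin 2) (ZMod p)) 0 1 = 0 ∧
      (g : Matrix (Fin 2) (Fin 2) (ZMod p)) 1 0 = 0}
  one_mem' := by
    constructor <;>
    · show ((1 : GL2 p) : Matrix (Fin 2) (Fin 2) (ZMod p)) _ _ = 0
      simp [Matrix.one_apply]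
  mul_mem' := by
    intro a b ha hb
    simp only [Set.mem_setOf_eq] at ha hb ⊢
    constructor <;>
    · show ((a * b : GL2 p) : Matrix (Fin 2) (Fin 2) (ZMod p)) _ _ = 0
      rw [Units.val_mul, Matrix.mul_apply, Fin.sum_univ_two]
      simp [ha.1, ha.2, hb.1, hb.2]
  inv_mem' := by
    intro a ha
    simp only [Set.mem_setOf_eq] at ha ⊢
    constructor <;>
    · show ((a⁻¹ : GL2 p) : Matrix (Fin 2) (Fin 2) (ZMod p)) _ _ = 0
      rw [Matrix.coe_units_inv, Matrix.inv_def]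
      simp [Matrix.adjugate_fin_two, ha.1, ha.2]

/-- A (generalized) Cartan subgroup `{[[x, u*y],[y, x]]}` of `GL₂(𝔽_p)`;
for `u = λ` a non-square this is the nonsplit Cartan `C'`, for `u = 1` the split Cartan `C''`. -/
def Cgen (u : ZMod p) : Subgroup (GL2 p) where
  carrier := {g | (g : Matrix (Fin 2) (Fin 2) (ZMod p)) 0 0 =
      (g : Matrix (Fin 2) (Fin 2) (ZMod p)) 1 1 ∧
      (g : Matrix (Fin 2) (Fin 2) (ZMod p)) 0 1 =
      u * (g : Matrix (Fin 2) (Fin 2) (ZMod p)) 1 0}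
  one_mem' := by
    constructor <;> simp [Matrix.one_apply]
  mul_mem' := by
    intro a b ha hb
    simp only [Set.mem_setOf_eq] at ha hb ⊢
    obtain ⟨ha1, ha2⟩ := ha
    obtain ⟨hb1, hb2⟩ := hb
    constructor <;>
    · show ((a * b : GL2 p) : Matrix (Fin 2) (Fin 2) (ZMod p)) _ _ =
        _
      simp only [Units.val_mul, Matrix.mul_apply, Fin.sum_univ_two]
      rw [ha1, ha2, hb1, hb2]
      ring
  inv_mem' := by
    intro a ha
    simp only [Set.mem_setOf_eq] at ha ⊢
    obtain ⟨ha1, ha2⟩ := ha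
    constructor <;>
    · show ((a⁻¹ : GL2 p) : Matrix (Fin 2) (Fin 2) (ZMod p)) _ _ = _
      rw [Matrix.coe_units_inv, Matrix.inv_def]
      simp [Matrix.adjugate_fin_two, ha1, ha2]
      try ring

/-- `N`, the normalizer of the split (diagonal) Cartan subgroup. -/
def Nspl : Subgroup (GL2 p) := Subgroup.normalizer ((Cs p : Set (GL2 p)))

/-- `N'`, the normalizer of the nonsplit Cartan subgroup (for `λ` a non-square). -/
def Nns (lam : ZMod p) : Subgroup (GL2 p) := Subgroup.normalizer ((Cgen p lam : Set (GL2 p)))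

/-- `N''`, the normalizer of the split Cartan `C'' = {[[x,y],[y,x]]}`. -/
def Nspl' : Subgroup (GL2 p) := Subgroup.normalizer ((Cgen p 1 : Set (GL2 p)))

/-- The double coset `N σ_t N` where `σ_t = [[1,1],[1,t]]`. -/
def dosetN (t : ZMod p) : Set (GL2 p) :=
  {g | ∃ a ∈ Nspl p, ∃ b ∈ Nspl p,
    ((a⁻¹ * g * b⁻¹ : GL2 p) : Matrix (Fin 2) (Fin 2) (ZMod p)) = !![1, 1; 1, t]}

/-- The double coset operator `ℝ[G/H] → ℝ[G/K]` (coefficients in `R`) attached to a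
left-`H`-invariant, right-`K`-invariant set `S ⊆ G`: the basis vector `xH` is sent to the
sum of the `K`-cosets contained in `x·S`. -/
def T (R : Type) [CommRing R] {G : Type} [Group G] [Fintype G] (H K : Subgroup G)
    (S : Set G) : ((G ⧸ H) → R) →ₗ[R] ((G ⧸ K) → R) where
  toFun v c := ∑ d : G ⧸ H,
    v d * (if c ∈ QuotientGroup.mk '' ((Quotient.out d) • S) then 1 else 0)
  map_add' := by
    intro u v
    funext c
    simp only [Pi.add_apply]
    rw [← Finset.sum_add_distrib]
    refine Finset.sum_congr rfl fun d _ => ?_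
    ring
  map_smul' := by
    intro a v
    funext c
    simp only [Pi.smul_apply, smul_eq_mul, RingHom.id_apply]
    rw [Finset.mul_sum]
    refine Finset.sum_congr rfl fun d _ => ?_
    ring

lemma two_ne_zero' [Fact p.Prime] (hodd : Odd p) : (2 : ZMod p) ≠ 0 := by
  have h2 : ((2:ℕ) : ZMod p) = (2 : ZMod p) := by norm_cast
  rw [← h2, Ne, ZMod.natCast_eq_zero_iff]
  intro h
  have h2' := (Nat.prime_dvd_prime_iff_eq (Fact.out) Nat.prime_two).mp h
  obtain ⟨k, hk⟩ := hodd
  omega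

lemma det_ne_zero' [Fact p.Prime] (y : GL2 p) :
    ((y : Matrix (Fin 2) (Fin 2) (ZMod p))).det ≠ 0 := by
  have h : (y : Matrix (Fin 2) (Fin 2) (ZMod p)).det * ((y⁻¹ : GL2 p) : Matrix (Fin 2) (Fin 2) (ZMod p)).det = 1 := by
    rw [← Matrix.det_mul, ← Units.val_mul, mul_inv_cancel, Units.val_one, Matrix.det_one]
  intro h0
  rw [h0, zero_mul] at h
  exact zero_ne_one h

lemma det_eq (y : GL2 p) : ((y : Matrix (Fin 2) (Fin 2) (ZMod p))).det =
    (y : Matrix (Fin 2) (Fin 2) (ZMod p)) 0 0 * (y : Matrix (Fin 2) (Fin 2) (ZMod p)) 1 1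
    - (y : Matrix (Fin 2) (Fin 2) (ZMod p)) 0 1 * (y : Matrix (Fin 2) (Fin 2) (ZMod p)) 1 0 := by
  rw [Matrix.det_fin_two]

lemma inv_val [Fact p.Prime] (y : GL2 p) :
    ((y⁻¹ : GL2 p) : Matrix (Fin 2) (Fin 2) (ZMod p)) =
      ((y : Matrix (Fin 2) (Fin 2) (ZMod p)).det)⁻¹ •
        !![(y : Matrix (Fin 2) (Fin 2) (ZMod p)) 1 1, -(y : Matrix (Fin 2) (Fin 2) (ZMod p)) 0 1;
           -(y : Matrix (Fin 2) (Fin 2) (ZMod p)) 1 0, (y : Matrix (Fin 2) (Fin 2) (ZMod p)) 0 0] := by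
  rw [Matrix.coe_units_inv, Matrix.inv_def, Matrix.adjugate_fin_two, Ring.inverse_eq_inv']

def wU : GL2 p := ⟨!![0,1;1,0], !![0,1;1,0],
  by rw [Matrix.mul_fin_two]; norm_num [Matrix.one_fin_two.symm],
  by rw [Matrix.mul_fin_two]; norm_num [Matrix.one_fin_two.symm]⟩

lemma wU_val : ((wU p : GL2 p) : Matrix (Fin 2) (Fin 2) (ZMod p)) = !![0,1;1,0] := rfl

lemma wU_inv : (wU p)⁻¹ = wU p := by
  apply inv_eq_of_mul_eq_one_right
  exact Units.ext (by rw [Units.val_mul, wU_val, Matrix.mul_fin_two]; norm_num [Matrix.one_fin_two.symm])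

def DU (a d : ZMod p) [Fact p.Prime] (ha : a ≠ 0) (hd : d ≠ 0) : GL2 p :=
  ⟨!![a,0;0,d], !![a⁻¹,0;0,d⁻¹],
   by rw [Matrix.mul_fin_two]; norm_num [Matrix.one_fin_two.symm, mul_inv_cancel₀ ha, mul_inv_cancel₀ hd],
   by rw [Matrix.mul_fin_two]; norm_num [Matrix.one_fin_two.symm, inv_mul_cancel₀ ha, inv_mul_cancel₀ hd]⟩

def sigU : GL2 p := ⟨!![1,1;1,0], !![0,1;1,-1],
  by rw [Matrix.mul_fin_two]; norm_num [Matrix.one_fin_two.symm],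
  by rw [Matrix.mul_fin_two]; norm_num [Matrix.one_fin_two.symm]⟩


lemma mem_Bor_iff (y : GL2 p) :
    y ∈ Bor p ↔ (y : Matrix (Fin 2) (Fin 2) (ZMod p)) 1 0 = 0 := Iff.rfl

lemma mem_Cs_iff (y : GL2 p) :
    y ∈ Cs p ↔ (y : Matrix (Fin 2) (Fin 2) (ZMod p)) 0 1 = 0 ∧
      (y : Matrix (Fin 2) (Fin 2) (ZMod p)) 1 0 = 0 := Iff.rfl

lemma mem_N_iff [Fact p.Prime] (hodd : Odd p) (y : GL2 p) :
    y ∈ Nspl p ↔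
      ((y : Matrix (Fin 2) (Fin 2) (ZMod p)) 0 1 = 0 ∧
       (y : Matrix (Fin 2) (Fin 2) (ZMod p)) 1 0 = 0) ∨
      ((y : Matrix (Fin 2) (Fin 2) (ZMod p)) 0 0 = 0 ∧
       (y : Matrix (Fin 2) (Fin 2) (ZMod p)) 1 1 = 0) := by
  have hdet := det_ne_zero' p y
  rw [det_eq] at hdet
  set Y := (y : Matrix (Fin 2) (Fin 2) (ZMod p)) with hY
  have h2 := two_ne_zero' p hodd
  constructor
  · intro hy
    have hm1 : (-1 : ZMod p) ≠ 0 := neg_ne_zero.mpr one_ne_zero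
    set t : GL2 p := DU p 1 (-1) one_ne_zero hm1 with ht
    have htc : t ∈ Cs p := by
      rw [mem_Cs_iff]
      constructor <;> simp [ht, DU]
    have hk := (((Subgroup.mem_normalizer_iff (H := Cs p)).mp hy) t).mp htc
    rw [mem_Cs_iff] at hk
    obtain ⟨hk01, hk10⟩ := hk
    have heq : ((y*t*y⁻¹ : GL2 p) : Matrix (Fin 2) (Fin 2) (ZMod p)) * Y
        = Y * ((t : GL2 p) : Matrix (Fin 2) (Fin 2) (ZMod p)) := by
      rw [← Units.val_mul, ← Units.val_mul]
      congr 1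
      group
    set K := ((y*t*y⁻¹ : GL2 p) : Matrix (Fin 2) (Fin 2) (ZMod p)) with hK
    have e00 := congrFun (congrFun heq 0) 0
    have e01 := congrFun (congrFun heq 0) 1
    have e10 := congrFun (congrFun heq 1) 0
    have e11 := congrFun (congrFun heq 1) 1
    simp [Matrix.mul_apply, Fin.sum_univ_two, hk01, hk10, ht, DU] at e00 e01 e10 e11
    by_cases h00 : Y 0 0 = 0
    · right
      refine ⟨h00, ?_⟩
      rw [h00, zero_mul, zero_sub, neg_ne_zero] at hdet
      have h01 : Y 0 1 ≠ 0 := fun h => hdet (by rw [h, zero_mul])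
      have h10 : Y 1 0 ≠ 0 := fun h => hdet (by rw [h, mul_zero])
      have hK11 : K 1 1 = 1 := by
        have := mul_right_cancel₀ h10 (e10.trans (one_mul (Y 1 0)).symm)
        exact this
      rw [hK11, one_mul] at e11
      have : (2 : ZMod p) * Y 1 1 = 0 := by linear_combination e11
      rcases mul_eq_zero.mp this with h | h
      · exact absurd h h2
      · exact h
    · left
      have hK00 : K 0 0 = 1 := by
        have := mul_right_cancel₀ h00 (e00.trans (one_mul (Y 0 0)).symm)
        exact this
      rw [hK00, one_mul] at e01
      have h01 : Y 0 1 = 0 := by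
        have h2' : (2 : ZMod p) * Y 0 1 = 0 := by linear_combination e01
        rcases mul_eq_zero.mp h2' with h | h
        · exact absurd h h2
        · exact h
      refine ⟨h01, ?_⟩
      rw [h01, zero_mul, sub_zero] at hdet
      have h11 : Y 1 1 ≠ 0 := fun h => hdet (by rw [h, mul_zero])
      have hK11 : K 1 1 = -1 := by
        have e11' : K 1 1 * Y 1 1 = -1 * Y 1 1 := by rw [e11]; ring
        exact mul_right_cancel₀ h11 e11'
      rw [hK11] at e10
      have h2' : (2 : ZMod p) * Y 1 0 = 0 := by linear_combination -e10
      rcases mul_eq_zero.mp h2' with h | h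
      · exact absurd h h2
      · exact h
  · intro hpat
    show y ∈ Subgroup.normalizer ((Cs p : Set (GL2 p)))
    rw [Subgroup.mem_normalizer_iff]
    intro h
    rw [mem_Cs_iff, mem_Cs_iff]
    have hinv : Y.det ≠ 0 := by rw [hY, det_eq, ← hY]; exact hdet
    have hdinv : (Y.det)⁻¹ ≠ 0 := inv_ne_zero hinv
    have hval : ((y * h * y⁻¹ : GL2 p) : Matrix (Fin 2) (Fin 2) (ZMod p)) =
        Y * (h : Matrix (Fin 2) (Fin 2) (ZMod p)) * ((y⁻¹ : GL2 p) : Matrix (Fin 2) (Fin 2) (ZMod p)) := by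
      rw [Units.val_mul, Units.val_mul]
    rw [hval, inv_val, ← hY]
    set H := (h : Matrix (Fin 2) (Fin 2) (ZMod p)) with hH
    rcases hpat with ⟨h01, h10⟩ | ⟨h00, h11⟩
    · rw [h01, zero_mul, sub_zero] at hdet
      have hY00 : Y 0 0 ≠ 0 := fun hc => hdet (by rw [hc, zero_mul])
      have hY11 : Y 1 1 ≠ 0 := fun hc => hdet (by rw [hc, mul_zero])
      simp [Matrix.mul_apply, Matrix.smul_apply, Fin.sum_univ_two, h01, h10, smul_eq_mul]
      tauto
    · have hdet' : Y 0 1 * Y 1 0 ≠ 0 := by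
        intro hc; apply hdet; rw [h00, h11, zero_mul, hc, zero_sub, neg_zero]
      have hY01 : Y 0 1 ≠ 0 := fun hc => hdet' (by rw [hc, zero_mul])
      have hY10 : Y 1 0 ≠ 0 := fun hc => hdet' (by rw [hc, mul_zero])
      simp [Matrix.mul_apply, Matrix.smul_apply, Fin.sum_univ_two, h00, h11, smul_eq_mul]
      tauto

lemma wU_sq : wU p * wU p = 1 :=
  Units.ext (by rw [Units.val_mul, wU_val, Matrix.mul_fin_two]; norm_num [Matrix.one_fin_two.symm])

lemma wU_mem_N [Fact p.Prime] (hodd : Odd p) : wU p ∈ Nspl p := by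
  rw [mem_N_iff p hodd]
  right
  constructor <;> simp [wU_val]

lemma DU_mem_N [Fact p.Prime] (hodd : Odd p) (a d : ZMod p) (ha : a ≠ 0) (hd : d ≠ 0) :
    DU p a d ha hd ∈ Nspl p := by
  rw [mem_N_iff p hodd]
  left
  constructor <;> simp [DU]

lemma mem_BN_iff [Fact p.Prime] (hodd : Odd p) (y : GL2 p) :
    y ∈ (Bor p : Set (GL2 p)) * (Nspl p : Set (GL2 p)) ↔
      (y : Matrix (Fin 2) (Fin 2) (ZMod p)) 1 0 = 0 ∨
      (y : Matrix (Fin 2) (Fin 2) (ZMod p)) 1 1 = 0 := by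
  constructor
  · rintro ⟨b, hb, n, hn, rfl⟩
    rw [SetLike.mem_coe, mem_Bor_iff] at hb
    rw [SetLike.mem_coe, mem_N_iff p hodd] at hn
    have hval : ((b * n : GL2 p) : Matrix (Fin 2) (Fin 2) (ZMod p)) =
        (b : Matrix (Fin 2) (Fin 2) (ZMod p)) * (n : Matrix (Fin 2) (Fin 2) (ZMod p)) :=
      Units.val_mul _ _
    rcases hn with ⟨h01, h10⟩ | ⟨h00, h11⟩
    · left
      rw [hval, Matrix.mul_apply, Fin.sum_univ_two, hb, h10, zero_mul, mul_zero, add_zero]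
    · right
      rw [hval, Matrix.mul_apply, Fin.sum_univ_two, hb, h11, zero_mul, mul_zero, add_zero]
  · intro hy
    rcases hy with h10 | h11
    · exact ⟨y, h10, 1, (Nspl p).one_mem, mul_one y⟩
    · refine ⟨y * wU p, ?_, wU p, wU_mem_N p hodd, ?_⟩
      · rw [SetLike.mem_coe, mem_Bor_iff, Units.val_mul, wU_val, Matrix.mul_apply,
          Fin.sum_univ_two]
        simp [h11]
      · show y * wU p * wU p = y
        rw [mul_assoc, wU_sq, mul_one]

lemma one_mem_mul_BN : (1 : GL2 p) ∈ (Bor p : Set (GL2 p)) * (Nspl p : Set (GL2 p)) :=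
  ⟨1, (Bor p).one_mem, 1, (Nspl p).one_mem, mul_one 1⟩

lemma DU_val [Fact p.Prime] (a d : ZMod p) (ha : a ≠ 0) (hd : d ≠ 0) :
    ((DU p a d ha hd : GL2 p) : Matrix (Fin 2) (Fin 2) (ZMod p)) = !![a,0;0,d] := rfl

lemma sigU_val : ((sigU p : GL2 p) : Matrix (Fin 2) (Fin 2) (ZMod p)) = !![1,1;1,0] := rfl

lemma doset_of_eq [Fact p.Prime] (y A B : GL2 p) (hA : A ∈ Nspl p) (hB : B ∈ Nspl p)
    (h : y = A * sigU p * B) : y ∈ dosetN p 0 := by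
  refine ⟨A, hA, B, hB, ?_⟩
  rw [h]
  have hgrp : A⁻¹ * (A * sigU p * B) * B⁻¹ = sigU p := by group
  rw [hgrp]
  rfl

lemma mem_doset_iff [Fact p.Prime] (hodd : Odd p) (y : GL2 p) :
    y ∈ dosetN p 0 ↔
      ((y : Matrix (Fin 2) (Fin 2) (ZMod p)) 1 1 = 0 ∧
        (y : Matrix (Fin 2) (Fin 2) (ZMod p)) 0 0 ≠ 0 ∧
        (y : Matrix (Fin 2) (Fin 2) (ZMod p)) 0 1 ≠ 0 ∧
        (y : Matrix (Fin 2) (Fin 2) (ZMod p)) 1 0 ≠ 0) ∨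
      ((y : Matrix (Fin 2) (Fin 2) (ZMod p)) 1 0 = 0 ∧
        (y : Matrix (Fin 2) (Fin 2) (ZMod p)) 0 0 ≠ 0 ∧
        (y : Matrix (Fin 2) (Fin 2) (ZMod p)) 0 1 ≠ 0 ∧
        (y : Matrix (Fin 2) (Fin 2) (ZMod p)) 1 1 ≠ 0) ∨
      ((y : Matrix (Fin 2) (Fin 2) (ZMod p)) 0 1 = 0 ∧
        (y : Matrix (Fin 2) (Fin 2) (ZMod p)) 0 0 ≠ 0 ∧
        (y : Matrix (Fin 2) (Fin 2) (ZMod p)) 1 0 ≠ 0 ∧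
        (y : Matrix (Fin 2) (Fin 2) (ZMod p)) 1 1 ≠ 0) ∨
      ((y : Matrix (Fin 2) (Fin 2) (ZMod p)) 0 0 = 0 ∧
        (y : Matrix (Fin 2) (Fin 2) (ZMod p)) 0 1 ≠ 0 ∧
        (y : Matrix (Fin 2) (Fin 2) (ZMod p)) 1 0 ≠ 0 ∧
        (y : Matrix (Fin 2) (Fin 2) (ZMod p)) 1 1 ≠ 0) := by
  constructor
  · rintro ⟨a, ha, b, hb, heq⟩
    have hda := det_ne_zero' p a
    rw [det_eq] at hda
    have hdb := det_ne_zero' p b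
    rw [det_eq] at hdb
    have hyv : (y : Matrix (Fin 2) (Fin 2) (ZMod p)) =
        (a : Matrix (Fin 2) (Fin 2) (ZMod p)) * !![1,1;1,(0:ZMod p)] *
          (b : Matrix (Fin 2) (Fin 2) (ZMod p)) := by
      have h1 : y = a * (a⁻¹ * y * b⁻¹) * b := by group
      conv_lhs => rw [h1]
      rw [Units.val_mul, Units.val_mul, heq]
    rw [mem_N_iff p hodd] at ha hb
    set Y := (y : Matrix (Fin 2) (Fin 2) (ZMod p)) with hYdef
    set A := (a : Matrix (Fin 2) (Fin 2) (ZMod p)) with hAdef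
    set B := (b : Matrix (Fin 2) (Fin 2) (ZMod p)) with hBdef
    have e00 := congrFun (congrFun hyv 0) 0
    have e01 := congrFun (congrFun hyv 0) 1
    have e10 := congrFun (congrFun hyv 1) 0
    have e11 := congrFun (congrFun hyv 1) 1
    rcases ha with ⟨hA01, hA10⟩ | ⟨hA00, hA11⟩ <;> rcases hb with ⟨hB01, hB10⟩ | ⟨hB00, hB11⟩
    · -- A diag, B diag : pattern 1
      have hda' : A 0 0 * A 1 1 ≠ 0 := by rwa [hA01, zero_mul, sub_zero] at hda
      have hdb' : B 0 0 * B 1 1 ≠ 0 := by rwa [hB01, zero_mul, sub_zero] at hdb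
      simp [Matrix.mul_apply, Fin.sum_univ_two, hA01, hA10, hB01, hB10] at e00 e01 e10 e11
      refine Or.inl ⟨e11, ?_, ?_, ?_⟩
      · rw [e00]; exact mul_ne_zero (left_ne_zero_of_mul hda') (left_ne_zero_of_mul hdb')
      · rw [e01]; exact mul_ne_zero (left_ne_zero_of_mul hda') (right_ne_zero_of_mul hdb')
      · rw [e10]; exact mul_ne_zero (right_ne_zero_of_mul hda') (left_ne_zero_of_mul hdb')
    · -- A diag, B anti : pattern 2
      have hda' : A 0 0 * A 1 1 ≠ 0 := by rwa [hA01, zero_mul, sub_zero] at hda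
      have hdb' : B 0 1 * B 1 0 ≠ 0 := by
        intro hc; apply hdb; rw [hB00, hB11, zero_mul, hc, zero_sub, neg_zero]
      simp [Matrix.mul_apply, Fin.sum_univ_two, hA01, hA10, hB00, hB11] at e00 e01 e10 e11
      refine Or.inr (Or.inl ⟨e10, ?_, ?_, ?_⟩)
      · rw [e00]; exact mul_ne_zero (left_ne_zero_of_mul hda') (right_ne_zero_of_mul hdb')
      · rw [e01]; exact mul_ne_zero (left_ne_zero_of_mul hda') (left_ne_zero_of_mul hdb')
      · rw [e11]; exact mul_ne_zero (right_ne_zero_of_mul hda') (left_ne_zero_of_mul hdb')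
    · -- A anti, B diag : pattern 3
      have hda' : A 0 1 * A 1 0 ≠ 0 := by
        intro hc; apply hda; rw [hA00, hA11, zero_mul, hc, zero_sub, neg_zero]
      have hdb' : B 0 0 * B 1 1 ≠ 0 := by rwa [hB01, zero_mul, sub_zero] at hdb
      simp [Matrix.mul_apply, Fin.sum_univ_two, hA00, hA11, hB01, hB10] at e00 e01 e10 e11
      refine Or.inr (Or.inr (Or.inl ⟨e01, ?_, ?_, ?_⟩))
      · rw [e00]; exact mul_ne_zero (left_ne_zero_of_mul hda') (left_ne_zero_of_mul hdb')
      · rw [e10]; exact mul_ne_zero (right_ne_zero_of_mul hda') (left_ne_zero_of_mul hdb')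
      · rw [e11]; exact mul_ne_zero (right_ne_zero_of_mul hda') (right_ne_zero_of_mul hdb')
    · -- A anti, B anti : pattern 4
      have hda' : A 0 1 * A 1 0 ≠ 0 := by
        intro hc; apply hda; rw [hA00, hA11, zero_mul, hc, zero_sub, neg_zero]
      have hdb' : B 0 1 * B 1 0 ≠ 0 := by
        intro hc; apply hdb; rw [hB00, hB11, zero_mul, hc, zero_sub, neg_zero]
      simp [Matrix.mul_apply, Fin.sum_univ_two, hA00, hA11, hB00, hB11] at e00 e01 e10 e11
      refine Or.inr (Or.inr (Or.inr ⟨e00, ?_, ?_, ?_⟩))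
      · rw [e01]; exact mul_ne_zero (left_ne_zero_of_mul hda') (left_ne_zero_of_mul hdb')
      · rw [e10]; exact mul_ne_zero (right_ne_zero_of_mul hda') (right_ne_zero_of_mul hdb')
      · rw [e11]; exact mul_ne_zero (right_ne_zero_of_mul hda') (left_ne_zero_of_mul hdb')
  · intro hpat
    set Y := (y : Matrix (Fin 2) (Fin 2) (ZMod p)) with hY
    rcases hpat with ⟨h11, h00, h01, h10⟩ | ⟨h10, h00, h01, h11⟩ |
      ⟨h01, h00, h10, h11⟩ | ⟨h00, h01, h10, h11⟩
    · refine doset_of_eq p y (DU p (Y 0 0) (Y 1 0) h00 h10)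
        (DU p 1 (Y 0 1 * (Y 0 0)⁻¹) one_ne_zero (mul_ne_zero h01 (inv_ne_zero h00)))
        (DU_mem_N p hodd _ _ _ _) (DU_mem_N p hodd _ _ _ _) ?_
      apply Units.ext
      rw [Units.val_mul, Units.val_mul, DU_val, DU_val, sigU_val, ← hY]
      ext i j
      fin_cases i <;> fin_cases j <;>
        simp [Matrix.mul_apply, Fin.sum_univ_two, h11] <;> field_simp
    · refine doset_of_eq p y (DU p 1 ((Y 1 1) * (Y 0 1)⁻¹) one_ne_zero
          (mul_ne_zero h11 (inv_ne_zero h01)))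
        (wU p * DU p (Y 0 0) (Y 0 1) h00 h01)
        (DU_mem_N p hodd _ _ _ _) (mul_mem (wU_mem_N p hodd) (DU_mem_N p hodd _ _ _ _)) ?_
      apply Units.ext
      rw [Units.val_mul, Units.val_mul, Units.val_mul, DU_val, DU_val, wU_val, sigU_val, ← hY]
      ext i j
      fin_cases i <;> fin_cases j <;>
        simp [Matrix.mul_apply, Fin.sum_univ_two, h10] <;> field_simp
    · refine doset_of_eq p y (DU p (Y 0 0) (Y 1 0) h00 h10 * wU p)
        (DU p 1 ((Y 1 1) * (Y 1 0)⁻¹) one_ne_zero (mul_ne_zero h11 (inv_ne_zero h10)))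
        (mul_mem (DU_mem_N p hodd _ _ _ _) (wU_mem_N p hodd)) (DU_mem_N p hodd _ _ _ _) ?_
      apply Units.ext
      rw [Units.val_mul, Units.val_mul, Units.val_mul, DU_val, DU_val, wU_val, sigU_val, ← hY]
      ext i j
      fin_cases i <;> fin_cases j <;>
        simp [Matrix.mul_apply, Fin.sum_univ_two, h01] <;> field_simp
    · refine doset_of_eq p y (DU p (Y 0 1) (Y 1 1) h01 h11 * wU p)
        (wU p * DU p ((Y 1 0) * (Y 1 1)⁻¹) 1 (mul_ne_zero h10 (inv_ne_zero h11)) one_ne_zero)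
        (mul_mem (DU_mem_N p hodd _ _ _ _) (wU_mem_N p hodd))
        (mul_mem (wU_mem_N p hodd) (DU_mem_N p hodd _ _ _ _)) ?_
      apply Units.ext
      rw [Units.val_mul, Units.val_mul, Units.val_mul, Units.val_mul, DU_val, DU_val, wU_val,
        sigU_val, ← hY]
      ext i j
      fin_cases i <;> fin_cases j <;>
        simp [Matrix.mul_apply, Fin.sum_univ_two, h00] <;> field_simp

lemma core_count [Fact p.Prime] (hodd : Odd p) (y : GL2 p) :
    ((if y ∈ (Bor p : Set (GL2 p)) * (Nspl p : Set (GL2 p)) then (1:ℤ) else 0)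
      + (if (wU p)⁻¹ * y ∈ (Bor p : Set (GL2 p)) * (Nspl p : Set (GL2 p)) then 1 else 0))
    = 2 * (if y ∈ Nspl p then 1 else 0) + (if y ∈ dosetN p 0 then 1 else 0) := by
  have hdet := det_ne_zero' p y
  rw [det_eq] at hdet
  have e10 : (((wU p)⁻¹ * y : GL2 p) : Matrix (Fin 2) (Fin 2) (ZMod p)) 1 0 =
      (y : Matrix (Fin 2) (Fin 2) (ZMod p)) 0 0 := by
    rw [wU_inv, Units.val_mul, wU_val, Matrix.mul_apply, Fin.sum_univ_two]
    simp
  have e11 : (((wU p)⁻¹ * y : GL2 p) : Matrix (Fin 2) (Fin 2) (ZMod p)) 1 1 =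
      (y : Matrix (Fin 2) (Fin 2) (ZMod p)) 0 1 := by
    rw [wU_inv, Units.val_mul, wU_val, Matrix.mul_apply, Fin.sum_univ_two]
    simp
  simp only [mem_BN_iff p hodd, mem_N_iff p hodd, mem_doset_iff p hodd, e10, e11]
  by_cases H00 : (y : Matrix (Fin 2) (Fin 2) (ZMod p)) 0 0 = 0 <;>
    by_cases H01 : (y : Matrix (Fin 2) (Fin 2) (ZMod p)) 0 1 = 0 <;>
    by_cases H10 : (y : Matrix (Fin 2) (Fin 2) (ZMod p)) 1 0 = 0 <;>
    by_cases H11 : (y : Matrix (Fin 2) (Fin 2) (ZMod p)) 1 1 = 0 <;>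
    simp_all

lemma mem_image_mk_iff {G : Type} [Group G] (K : Subgroup G) (S : Set G)
    (hS : ∀ s ∈ S, ∀ k ∈ K, s * k ∈ S) (c : G ⧸ K) :
    c ∈ (QuotientGroup.mk '' S : Set (G ⧸ K)) ↔ Quotient.out c ∈ S := by
  constructor
  · rintro ⟨s, hs, hmk⟩
    have h1 : (QuotientGroup.mk s : G ⧸ K) = QuotientGroup.mk (Quotient.out c) := by
      rw [hmk, QuotientGroup.out_eq']
    have h2 : s⁻¹ * Quotient.out c ∈ K := QuotientGroup.eq.mp h1
    have h3 := hS s hs _ h2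
    rwa [mul_inv_cancel_left] at h3
  · intro h
    exact ⟨Quotient.out c, h, QuotientGroup.out_eq' c⟩

lemma smul_coe_mul {G : Type} [Group G] (H : Subgroup G) (S : Set G) {b : G} (hb : b ∈ H) :
    b • ((H : Set G) * S) = (H : Set G) * S := by
  have h1 : b • ((H : Set G) * S) = (b • (H : Set G)) * S := by
    rw [← smul_mul_assoc]
  rw [h1]
  congr 1
  ext x
  constructor
  · rintro ⟨y, hy, rfl⟩
    exact mul_mem hb hy
  · intro hx
    exact ⟨b⁻¹ * x, mul_mem (inv_mem hb) hx, by simp [smul_eq_mul, mul_inv_cancel_left]⟩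

set_option synthInstance.maxHeartbeats 1000000
set_option maxHeartbeats 1000000

lemma out_smul_BN [Fact p.Prime] (x : GL2 p) :
    (Quotient.out (QuotientGroup.mk x : GL2 p ⧸ Bor p)) •
        ((Bor p : Set (GL2 p)) * (Nspl p : Set (GL2 p)))
      = x • ((Bor p : Set (GL2 p)) * (Nspl p : Set (GL2 p))) := by
  have h1 : (QuotientGroup.mk x : GL2 p ⧸ Bor p) =
      QuotientGroup.mk (Quotient.out (QuotientGroup.mk x : GL2 p ⧸ Bor p)) := by
    rw [QuotientGroup.out_eq']
  have h2 : x⁻¹ * Quotient.out (QuotientGroup.mk x : GL2 p ⧸ Bor p) ∈ Bor p :=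
    QuotientGroup.eq.mp h1
  have h3 : Quotient.out (QuotientGroup.mk x : GL2 p ⧸ Bor p) =
      x * (x⁻¹ * Quotient.out (QuotientGroup.mk x : GL2 p ⧸ Bor p)) := by
    rw [mul_inv_cancel_left]
  rw [h3, mul_smul, smul_coe_mul (Bor p) _ h2]

lemma image_NB [Fact p.Prime] (hodd : Odd p) (g : GL2 p) :
    (QuotientGroup.mk '' (g • ((Nspl p : Set (GL2 p)) * (Bor p : Set (GL2 p))))
        : Set (GL2 p ⧸ Bor p))
      = {QuotientGroup.mk g, QuotientGroup.mk (g * wU p)} := by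
  ext e
  constructor
  · rintro ⟨s, hs, rfl⟩
    obtain ⟨t, ht, rfl⟩ := Set.mem_smul_set.mp hs
    obtain ⟨n, hn, b, hb, rfl⟩ := ht
    have hmk : (QuotientGroup.mk (g • (n * b)) : GL2 p ⧸ Bor p) = QuotientGroup.mk (g * n) := by
      rw [smul_eq_mul, ← mul_assoc]
      exact QuotientGroup.mk_mul_of_mem (g * n) hb
    rw [hmk]
    rw [SetLike.mem_coe, mem_N_iff p hodd] at hn
    rcases hn with ⟨h01, h10⟩ | ⟨h00, h11⟩
    · left
      exact QuotientGroup.mk_mul_of_mem g h10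
    · right
      rw [Set.mem_singleton_iff, QuotientGroup.eq]
      have hval : ((g * n)⁻¹ * (g * wU p) : GL2 p) = n⁻¹ * wU p := by group
      rw [hval, mem_Bor_iff, Units.val_mul, inv_val, Matrix.mul_apply, Fin.sum_univ_two, wU_val]
      simp [h00]
  · rintro (rfl | rfl)
    · exact ⟨g, ⟨1, ⟨1, (Nspl p).one_mem, 1, (Bor p).one_mem, mul_one 1⟩, by simp⟩, rfl⟩
    · exact ⟨g * wU p, ⟨wU p, ⟨wU p, wU_mem_N p hodd, 1, (Bor p).one_mem, mul_one _⟩,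
        by simp [smul_eq_mul]⟩, rfl⟩

lemma mk_ne_mk [Fact p.Prime] (g : GL2 p) :
    (QuotientGroup.mk g : GL2 p ⧸ Bor p) ≠ QuotientGroup.mk (g * wU p) := by
  intro h
  have h2 : g⁻¹ * (g * wU p) ∈ Bor p := QuotientGroup.eq.mp h
  rw [inv_mul_cancel_left, mem_Bor_iff, wU_val] at h2
  simp at h2

lemma doset_mul_mem [Fact p.Prime] {y n : GL2 p} (hy : y ∈ dosetN p 0) (hn : n ∈ Nspl p) :
    y * n ∈ dosetN p 0 := by
  obtain ⟨a, ha, b, hb, heq⟩ := hy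
  refine ⟨a, ha, b * n, mul_mem hb hn, ?_⟩
  have h1 : (a⁻¹ * (y * n) * (b * n)⁻¹ : GL2 p) = a⁻¹ * y * b⁻¹ := by group
  rw [h1, heq]

lemma key_count [Fact p.Prime] (hodd : Odd p) (g : GL2 p) (c : GL2 p ⧸ Nspl p) :
    (∑ e : GL2 p ⧸ Bor p,
      (if e ∈ (QuotientGroup.mk '' (g • ((Nspl p : Set (GL2 p)) * (Bor p : Set (GL2 p))))
          : Set (GL2 p ⧸ Bor p)) then (1:ℤ) else 0) *
      (if c ∈ (QuotientGroup.mk ''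
          ((Quotient.out e) • ((Bor p : Set (GL2 p)) * (Nspl p : Set (GL2 p))))
          : Set (GL2 p ⧸ Nspl p)) then 1 else 0))
    = 2 * (if c ∈ (QuotientGroup.mk '' (g • (Nspl p : Set (GL2 p)))
          : Set (GL2 p ⧸ Nspl p)) then 1 else 0)
      + (if c ∈ (QuotientGroup.mk '' (g • (dosetN p 0)) : Set (GL2 p ⧸ Nspl p)) then 1 else 0) := by
  classical
  set f : (GL2 p ⧸ Bor p) → ℤ := fun e =>
    (if c ∈ (QuotientGroup.mk ''
        ((Quotient.out e) • ((Bor p : Set (GL2 p)) * (Nspl p : Set (GL2 p))))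
        : Set (GL2 p ⧸ Nspl p)) then 1 else 0) with hf
  have hBNinv : ∀ (x : GL2 p), ∀ s ∈ x • ((Bor p : Set (GL2 p)) * (Nspl p : Set (GL2 p))),
      ∀ k ∈ Nspl p, s * k ∈ x • ((Bor p : Set (GL2 p)) * (Nspl p : Set (GL2 p))) := by
    intro x s hs k hk
    obtain ⟨t, ht, rfl⟩ := Set.mem_smul_set.mp hs
    obtain ⟨b, hb, n, hn, rfl⟩ := ht
    exact Set.mem_smul_set.mpr ⟨b * (n * k), ⟨b, hb, n * k, mul_mem hn hk, rfl⟩,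
      by simp [smul_eq_mul, mul_assoc]⟩
  have hff : ∀ x : GL2 p, f (QuotientGroup.mk x) =
      if x⁻¹ * Quotient.out c ∈ (Bor p : Set (GL2 p)) * (Nspl p : Set (GL2 p)) then 1 else 0 := by
    intro x
    rw [hf]
    simp only [out_smul_BN p x]
    simp only [mem_image_mk_iff (Nspl p) _ (hBNinv x) c, Set.mem_smul_set_iff_inv_smul_mem,
      smul_eq_mul]
  have hsplit : ∀ e : GL2 p ⧸ Bor p,
      (if e ∈ (QuotientGroup.mk '' (g • ((Nspl p : Set (GL2 p)) * (Bor p : Set (GL2 p))))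
          : Set (GL2 p ⧸ Bor p)) then (1:ℤ) else 0) * f e
      = (if e = QuotientGroup.mk g then f e else 0)
        + (if e = QuotientGroup.mk (g * wU p) then f e else 0) := by
    intro e
    rw [image_NB p hodd g]
    by_cases h1 : e = QuotientGroup.mk g <;> by_cases h2 : e = QuotientGroup.mk (g * wU p)
    · exact absurd (h1 ▸ h2) (mk_ne_mk p g)
    · simp [Set.mem_insert_iff, h1, h2, mk_ne_mk p g, (mk_ne_mk p g).symm]
    · simp [Set.mem_insert_iff, h1, h2, mk_ne_mk p g, (mk_ne_mk p g).symm]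
    · simp [Set.mem_insert_iff, h1, h2]
  rw [Finset.sum_congr rfl (fun e _ => hsplit e), Finset.sum_add_distrib]
  rw [Finset.sum_ite_eq' Finset.univ (QuotientGroup.mk g) f,
    Finset.sum_ite_eq' Finset.univ (QuotientGroup.mk (g * wU p)) f]
  simp only [Finset.mem_univ, if_true]
  rw [hff g, hff (g * wU p)]
  -- right hand side conversions
  have hNinv : ∀ s ∈ g • (Nspl p : Set (GL2 p)), ∀ k ∈ Nspl p, s * k ∈ g • (Nspl p : Set (GL2 p)) := by
    intro s hs k hk
    obtain ⟨t, ht, rfl⟩ := Set.mem_smul_set.mp hs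
    exact Set.mem_smul_set.mpr ⟨t * k, mul_mem ht hk, by simp [smul_eq_mul, mul_assoc]⟩
  have hDinv : ∀ s ∈ g • dosetN p 0, ∀ k ∈ Nspl p, s * k ∈ g • dosetN p 0 := by
    intro s hs k hk
    obtain ⟨t, ht, rfl⟩ := Set.mem_smul_set.mp hs
    exact Set.mem_smul_set.mpr ⟨t * k, doset_mul_mem p ht hk, by simp [smul_eq_mul, mul_assoc]⟩
  simp only [mem_image_mk_iff (Nspl p) _ hNinv c, mem_image_mk_iff (Nspl p) _ hDinv c,
    Set.mem_smul_set_iff_inv_smul_mem, smul_eq_mul]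
  have hw : ((g * wU p)⁻¹ * Quotient.out c : GL2 p) = (wU p)⁻¹ * (g⁻¹ * Quotient.out c) := by
    rw [_root_.mul_inv_rev, mul_assoc]
  rw [hw]
  have := core_count p hodd (g⁻¹ * Quotient.out c)
  simp only [SetLike.mem_coe] at this ⊢
  exact this

lemma T_apply (R : Type) [CommRing R] {G : Type} [Group G] [Fintype G] (H K : Subgroup G)
    (S : Set G) (v : (G ⧸ H) → R) (c : G ⧸ K) :
    T R H K S v c = ∑ d : G ⧸ H,
      v d * (if c ∈ QuotientGroup.mk '' ((Quotient.out d) • S) then 1 else 0) := rfl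
end Chen

set_option synthInstance.maxHeartbeats 1000000
set_option maxHeartbeats 1000000

open Chen in
/-- **Lemma 8.4.** In `ℤ[N\\G/N]`, the composite operator `NB × BN : ℤ[G/N] → ℤ[G/B] → ℤ[G/N]`
equals `2·N + Nσ₀N`, where `σ₀ = [[1,1],[1,0]]`. -/
theorem NB_BN_op_decomposition (p : ℕ) [Fact p.Prime] (hodd : Odd p) :
    (T ℤ (Bor p) (Nspl p) (((Bor p : Set (GL2 p)) * (Nspl p : Set (GL2 p))))).comp
      (T ℤ (Nspl p) (Bor p) (((Nspl p : Set (GL2 p)) * (Bor p : Set (GL2 p))))) =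
    (2 : ℤ) • T ℤ (Nspl p) (Nspl p) ((Nspl p : Set (GL2 p))) + T ℤ (Nspl p) (Nspl p) (dosetN p 0) := by
  refine LinearMap.ext fun v => funext fun c => ?_
  simp only [LinearMap.comp_apply, LinearMap.add_apply, LinearMap.smul_apply, Pi.add_apply,
    Pi.smul_apply, smul_eq_mul, T_apply]
  have lhs_eq : (∑ x : GL2 p ⧸ Bor p,
      (∑ d : GL2 p ⧸ Nspl p, v d *
        if x ∈ QuotientGroup.mk '' (Quotient.out d • ((Nspl p : Set (GL2 p)) * (Bor p : Set (GL2 p)))) then 1 else 0) *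
        if c ∈ QuotientGroup.mk '' (Quotient.out x • ((Bor p : Set (GL2 p)) * (Nspl p : Set (GL2 p)))) then 1 else 0)
      = ∑ d : GL2 p ⧸ Nspl p, v d * (∑ x : GL2 p ⧸ Bor p,
          (if x ∈ QuotientGroup.mk '' (Quotient.out d • ((Nspl p : Set (GL2 p)) * (Bor p : Set (GL2 p)))) then (1:ℤ) else 0) *
          if c ∈ QuotientGroup.mk '' (Quotient.out x • ((Bor p : Set (GL2 p)) * (Nspl p : Set (GL2 p)))) then 1 else 0) := by
    rw [Finset.sum_congr rfl fun x (_ : x ∈ Finset.univ) => Finset.sum_mul Finset.univ _ _,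
      Finset.sum_comm]
    exact Finset.sum_congr rfl fun d _ => by
      rw [Finset.mul_sum]
      exact Finset.sum_congr rfl fun x _ => by ring
  rw [lhs_eq]
  have step : ∀ d : GL2 p ⧸ Nspl p,
      (∑ x : GL2 p ⧸ Bor p,
          (if x ∈ QuotientGroup.mk '' (Quotient.out d • ((Nspl p : Set (GL2 p)) * (Bor p : Set (GL2 p)))) then (1:ℤ) else 0) *
          if c ∈ QuotientGroup.mk '' (Quotient.out x • ((Bor p : Set (GL2 p)) * (Nspl p : Set (GL2 p)))) then 1 else 0)
      = 2 * (if c ∈ QuotientGroup.mk '' (Quotient.out d • (Nspl p : Set (GL2 p))) then 1 else 0)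
        + (if c ∈ QuotientGroup.mk '' (Quotient.out d • dosetN p 0) then 1 else 0) :=
    fun d => key_count p hodd (Quotient.out d) c
  rw [Finset.sum_congr rfl fun d _ => by rw [step d]]
  simp only [mul_add, Finset.sum_add_distrib]
  congr 1
  rw [Finset.mul_sum]
  exact Finset.sum_congr rfl fun d _ => by ring
end
end

section
/- Let p be an odd prime, G = GL₂(𝔽_p), and N the normalizer of the diagonal torus. Then in ℤ[N\G/N], NG × GN = N + Σ_{t ∈ (𝔽_p∖{1})/∼} Nσ_tN (sum over all t with t ∼ t⁻¹ for t ≠ 0). -/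
open Matrix Pointwise
open scoped Classical

noncomputable section

section Aux
namespace Chen

variable {p : ℕ} [Fact p.Prime]

local notation "Mat" => Matrix (Fin 2) (Fin 2) (ZMod p)

lemma det_coe_ne_zero (g : GL2 p) : ((g : Mat)).det ≠ 0 :=
  ((Matrix.isUnit_iff_isUnit_det (g : Mat)).mp g.isUnit).ne_zero

lemma det_entries_ne_zero (g : GL2 p) :
    (g : Mat) 0 0 * (g : Mat) 1 1 - (g : Mat) 0 1 * (g : Mat) 1 0 ≠ 0 := by
  rw [← Matrix.det_fin_two]; exact det_coe_ne_zero g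

/-- make a GL2 element from an explicit matrix -/
def mkGL (A : Mat) (h : A.det ≠ 0) : GL2 p := Matrix.GeneralLinearGroup.mkOfDetNeZero A h

@[simp] lemma coe_mkGL (A : Mat) (h : A.det ≠ 0) : ((mkGL A h : GL2 p) : Mat) = A := rfl

end Chen
end Aux
section Aux2
namespace Chen

variable {p : ℕ} [Fact p.Prime]

local notation "Mat" => Matrix (Fin 2) (Fin 2) (ZMod p)

/-- the Weyl element -/
def Wgl : GL2 p := mkGL !![0,1;1,0] (by simp [Matrix.det_fin_two_of])

lemma Wgl_mul_self : (Wgl : GL2 p) * Wgl = 1 := by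
  apply Units.ext
  show ((Wgl : GL2 p) : Mat) * ((Wgl : GL2 p) : Mat) = 1
  simp [Wgl, Matrix.mul_fin_two, Matrix.one_fin_two]

lemma Wgl_inv : (Wgl : GL2 p)⁻¹ = Wgl := inv_eq_of_mul_eq_one_right Wgl_mul_self

lemma Wgl_mem_Nspl : (Wgl : GL2 p) ∈ Nspl p := by
  have key : ∀ n : GL2 p, n ∈ Cs p → (Wgl : GL2 p) * n * Wgl⁻¹ ∈ Cs p := by
    intro n hn
    obtain ⟨h1, h2⟩ := hn
    rw [Wgl_inv]
    constructor <;>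
    · show ((Wgl * n * Wgl : GL2 p) : Mat) _ _ = 0
      rw [Units.val_mul, Units.val_mul]
      simp only [Wgl, coe_mkGL]
      rw [(Matrix.eta_fin_two (n : Mat))]
      simp [Matrix.mul_fin_two, h1, h2]
  show Wgl ∈ Subgroup.normalizer ((Cs p : Set (GL2 p)))
  rw [Subgroup.mem_normalizer_iff]
  intro n
  constructor
  · exact key n
  · intro hn
    have h2 : (Wgl : GL2 p) * (Wgl * n * Wgl⁻¹) * Wgl⁻¹ = n := by
      rw [Wgl_inv]
      calc (Wgl : GL2 p) * (Wgl * n * Wgl) * Wgl = (Wgl * Wgl) * n * (Wgl * Wgl) := by group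
        _ = n := by rw [Wgl_mul_self]; group
    have := key _ hn
    rwa [h2] at this

lemma mem_Nspl_iff (hodd : Odd p) (g : GL2 p) :
    g ∈ Nspl p ↔ ((g : Mat) 0 1 = 0 ∧ (g : Mat) 1 0 = 0) ∨
      ((g : Mat) 0 0 = 0 ∧ (g : Mat) 1 1 = 0) := by
  have hp2 : (2 : ZMod p) ≠ 0 := by
    have : ((2 : ℕ) : ZMod p) ≠ 0 := by
      rw [Ne, ZMod.natCast_eq_zero_iff]
      intro h
      have hp : p = 2 := (Nat.prime_dvd_prime_iff_eq (Fact.out) Nat.prime_two).mp h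
      rw [hp] at hodd
      exact (Nat.not_odd_iff_even.mpr (by decide)) hodd
    simpa using this
  constructor
  · intro hg
    -- conjugate diag(1,-1)
    have hD : (mkGL !![1,0;0,-1] (by simp [Matrix.det_fin_two_of]) : GL2 p) ∈ Cs p := by
      constructor <;> simp
    have hg' : g ∈ Subgroup.normalizer ((Cs p : Set (GL2 p))) := hg
    have hc := (Subgroup.mem_normalizer_iff.mp hg' _).mp hD
    obtain ⟨h1, h2⟩ := hc
    have hdet := det_entries_ne_zero g
    set a := (g : Mat) 0 0; set b := (g : Mat) 0 1; set c := (g : Mat) 1 0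
    set d := (g : Mat) 1 1
    have hMg : (g : Mat) = !![a,b;c,d] := Matrix.eta_fin_two _
    have hginv : ((g⁻¹ : GL2 p) : Mat) =
        (a * d - b * c)⁻¹ • !![d, -b; -c, a] := by
      rw [Matrix.coe_units_inv, Matrix.inv_def, Matrix.adjugate_fin_two,
        Ring.inverse_eq_inv', Matrix.det_fin_two]
    rw [show ((g * mkGL !![1,0;0,-1] (by simp [Matrix.det_fin_two_of]) * g⁻¹ : GL2 p) : Mat)
        = (g : Mat) * !![1,0;0,-1] * ((g⁻¹ : GL2 p) : Mat) by
      rw [Units.val_mul, Units.val_mul]; rfl] at h1 h2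
    rw [hMg, hginv, Matrix.mul_smul, Matrix.mul_fin_two] at h1 h2
    simp only [Matrix.smul_apply] at h1 h2
    rw [Matrix.mul_fin_two] at h1 h2
    simp only [Matrix.cons_val', Matrix.cons_val_zero, Matrix.cons_val_one, Matrix.head_cons,
      Matrix.head_fin_const, Matrix.empty_val', Matrix.cons_val_fin_one, smul_eq_mul,
      Matrix.of_apply, Matrix.cons_val_one, Matrix.head_cons] at h1 h2
    -- h1 : (ad-bc)⁻¹ * (...) = 0, similarly h2
    have hinv : ((a*d - b*c)⁻¹ : ZMod p) ≠ 0 := inv_ne_zero hdet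
    have hab : a * b = 0 := by
      have h1' := (mul_eq_zero.mp h1).resolve_left hinv
      have : (-2 : ZMod p) * (a * b) = 0 := by linear_combination h1'
      have h2ne : (-2 : ZMod p) ≠ 0 := by simpa using hp2
      exact (mul_eq_zero.mp this).resolve_left h2ne
    have hcd : c * d = 0 := by
      have h2' := (mul_eq_zero.mp h2).resolve_left hinv
      have : (2 : ZMod p) * (c * d) = 0 := by linear_combination h2'
      exact (mul_eq_zero.mp this).resolve_left hp2
    rcases mul_eq_zero.mp hab with ha | hb
    · right
      rcases mul_eq_zero.mp hcd with hc | hd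
      · exfalso; apply hdet; rw [ha, hc]; ring
      · exact ⟨ha, hd⟩
    · left
      rcases mul_eq_zero.mp hcd with hc | hd
      · exact ⟨hb, hc⟩
      · exfalso; apply hdet; rw [hb, hd]; ring
  · rintro (⟨h1, h2⟩ | ⟨h1, h2⟩)
    · exact Subgroup.le_normalizer (H := Cs p) ⟨h1, h2⟩
    · -- antidiagonal: g = Wgl * (Wgl⁻¹ * g), with Wgl⁻¹ * g diagonal
      have hd : (Wgl⁻¹ * g : GL2 p) ∈ Cs p := by
        rw [Wgl_inv]
        constructor <;>
        · show ((Wgl * g : GL2 p) : Mat) _ _ = 0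
          rw [Units.val_mul]
          simp only [Wgl, coe_mkGL]
          rw [Matrix.eta_fin_two ((g : GL2 p) : Mat), h1, h2]
          simp [Matrix.mul_fin_two]
      have : g = Wgl * (Wgl⁻¹ * g) := by group
      rw [this]
      exact mul_mem Wgl_mem_Nspl (Subgroup.le_normalizer (H := Cs p) hd)

end Chen
end Aux2
section Aux3
namespace Chen

variable {p : ℕ} [Fact p.Prime]

local notation "Mat" => Matrix (Fin 2) (Fin 2) (ZMod p)

lemma dosetN_of_eq {t : ZMod p} (a b : GL2 p) (ha : a ∈ Nspl p) (hb : b ∈ Nspl p) (g : GL2 p)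
    (h : (g : Mat) = (a : Mat) * !![1,1;1,t] * (b : Mat)) : g ∈ dosetN p t := by
  refine ⟨a, ha, b, hb, ?_⟩
  rw [Units.val_mul, Units.val_mul, Matrix.coe_units_inv, Matrix.coe_units_inv, h]
  have hda : IsUnit ((a : Mat)).det := (Matrix.isUnit_iff_isUnit_det _).mp a.isUnit
  have hdb : IsUnit ((b : Mat)).det := (Matrix.isUnit_iff_isUnit_det _).mp b.isUnit
  rw [show ((a : Mat))⁻¹ * ((a:Mat) * !![1,1;1,t] * (b:Mat)) * ((b:Mat))⁻¹
      = ((a : Mat))⁻¹ * (a:Mat) * !![1,1;1,t] * ((b:Mat) * ((b:Mat))⁻¹) by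
    noncomm_ring]
  rw [Matrix.nonsing_inv_mul _ hda, Matrix.mul_nonsing_inv _ hdb, one_mul, mul_one]

lemma dosetN_elim {t : ZMod p} {g : GL2 p} (hg : g ∈ dosetN p t) :
    ∃ a ∈ Nspl p, ∃ b ∈ Nspl p, (g : Mat) = (a : Mat) * !![1,1;1,t] * (b : Mat) := by
  obtain ⟨a, ha, b, hb, h⟩ := hg
  refine ⟨a, ha, b, hb, ?_⟩
  have hgab : g = a * (a⁻¹ * g * b⁻¹) * b := by group
  rw [hgab, Units.val_mul, Units.val_mul, h]

end Chen
end Aux3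
section Aux4
namespace Chen

variable {p : ℕ} [Fact p.Prime]

local notation "Mat" => Matrix (Fin 2) (Fin 2) (ZMod p)

lemma dosetN_inv_rel (hodd : Odd p) {t : ZMod p} {g : GL2 p} (hg : g ∈ dosetN p t) :
    ((g : Mat) 0 0 * (g : Mat) 1 1 = t * ((g : Mat) 0 1 * (g : Mat) 1 0) ∨
     t * ((g : Mat) 0 0 * (g : Mat) 1 1) = (g : Mat) 0 1 * (g : Mat) 1 0) ∧ g ∉ Nspl p := by
  obtain ⟨a, haN, b, hbN, heq⟩ := dosetN_elim hg
  have hda := det_entries_ne_zero a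
  have hdb := det_entries_ne_zero b
  rcases (mem_Nspl_iff hodd a).mp haN with ⟨ha1, ha2⟩ | ⟨ha1, ha2⟩ <;>
    rcases (mem_Nspl_iff hodd b).mp hbN with ⟨hb1, hb2⟩ | ⟨hb1, hb2⟩
  · -- a diag, b diag
    rw [ha1, ha2] at hda; rw [hb1, hb2] at hdb
    have hx : (a : Mat) 0 0 ≠ 0 ∧ (a : Mat) 1 1 ≠ 0 := by
      rw [← mul_ne_zero_iff]; simpa using hda
    have hu : (b : Mat) 0 0 ≠ 0 ∧ (b : Mat) 1 1 ≠ 0 := by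
      rw [← mul_ne_zero_iff]; simpa using hdb
    rw [Matrix.eta_fin_two ((a : GL2 p) : Mat), Matrix.eta_fin_two ((b : GL2 p) : Mat),
      ha1, ha2, hb1, hb2] at heq
    have e00 : (g : Mat) 0 0 = (a : Mat) 0 0 * (b : Mat) 0 0 := by
      rw [heq]; simp [Matrix.mul_apply, Fin.sum_univ_two]
    have e01 : (g : Mat) 0 1 = (a : Mat) 0 0 * (b : Mat) 1 1 := by
      rw [heq]; simp [Matrix.mul_apply, Fin.sum_univ_two]
    have e10 : (g : Mat) 1 0 = (a : Mat) 1 1 * (b : Mat) 0 0 := by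
      rw [heq]; simp [Matrix.mul_apply, Fin.sum_univ_two]
    have e11 : (g : Mat) 1 1 = (a : Mat) 1 1 * t * (b : Mat) 1 1 := by
      rw [heq]; simp [Matrix.mul_apply, Fin.sum_univ_two]
    constructor
    · left; rw [e00, e01, e10, e11]; ring
    · intro hN
      rcases (mem_Nspl_iff hodd g).mp hN with ⟨h1, h2⟩ | ⟨h1, h2⟩
      · rw [e01] at h1; exact (mul_ne_zero hx.1 hu.2) h1
      · rw [e00] at h1; exact (mul_ne_zero hx.1 hu.1) h1
  · -- a diag, b antidiag
    rw [ha1, ha2] at hda; rw [hb1, hb2] at hdb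
    have hx : (a : Mat) 0 0 ≠ 0 ∧ (a : Mat) 1 1 ≠ 0 := by
      rw [← mul_ne_zero_iff]; simpa using hda
    have hu : (b : Mat) 0 1 ≠ 0 ∧ (b : Mat) 1 0 ≠ 0 := by
      rw [← mul_ne_zero_iff]; intro h; apply hdb; rw [h]; ring
    rw [Matrix.eta_fin_two ((a : GL2 p) : Mat), Matrix.eta_fin_two ((b : GL2 p) : Mat),
      ha1, ha2, hb1, hb2] at heq
    have e00 : (g : Mat) 0 0 = (a : Mat) 0 0 * (b : Mat) 1 0 := by
      rw [heq]; simp [Matrix.mul_apply, Fin.sum_univ_two]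
    have e01 : (g : Mat) 0 1 = (a : Mat) 0 0 * (b : Mat) 0 1 := by
      rw [heq]; simp [Matrix.mul_apply, Fin.sum_univ_two]
    have e10 : (g : Mat) 1 0 = (a : Mat) 1 1 * t * (b : Mat) 1 0 := by
      rw [heq]; simp [Matrix.mul_apply, Fin.sum_univ_two]
    have e11 : (g : Mat) 1 1 = (a : Mat) 1 1 * (b : Mat) 0 1 := by
      rw [heq]; simp [Matrix.mul_apply, Fin.sum_univ_two]
    constructor
    · right; rw [e00, e01, e10, e11]; ring
    · intro hN
      rcases (mem_Nspl_iff hodd g).mp hN with ⟨h1, h2⟩ | ⟨h1, h2⟩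
      · rw [e01] at h1; exact (mul_ne_zero hx.1 hu.1) h1
      · rw [e00] at h1; exact (mul_ne_zero hx.1 hu.2) h1
  · -- a antidiag, b diag
    rw [ha1, ha2] at hda; rw [hb1, hb2] at hdb
    have hx : (a : Mat) 0 1 ≠ 0 ∧ (a : Mat) 1 0 ≠ 0 := by
      rw [← mul_ne_zero_iff]; intro h; apply hda; rw [h]; ring
    have hu : (b : Mat) 0 0 ≠ 0 ∧ (b : Mat) 1 1 ≠ 0 := by
      rw [← mul_ne_zero_iff]; simpa using hdb
    rw [Matrix.eta_fin_two ((a : GL2 p) : Mat), Matrix.eta_fin_two ((b : GL2 p) : Mat),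
      ha1, ha2, hb1, hb2] at heq
    have e00 : (g : Mat) 0 0 = (a : Mat) 0 1 * (b : Mat) 0 0 := by
      rw [heq]; simp [Matrix.mul_apply, Fin.sum_univ_two]
    have e01 : (g : Mat) 0 1 = (a : Mat) 0 1 * t * (b : Mat) 1 1 := by
      rw [heq]; simp [Matrix.mul_apply, Fin.sum_univ_two]
    have e10 : (g : Mat) 1 0 = (a : Mat) 1 0 * (b : Mat) 0 0 := by
      rw [heq]; simp [Matrix.mul_apply, Fin.sum_univ_two]
    have e11 : (g : Mat) 1 1 = (a : Mat) 1 0 * (b : Mat) 1 1 := by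
      rw [heq]; simp [Matrix.mul_apply, Fin.sum_univ_two]
    constructor
    · right; rw [e00, e01, e10, e11]; ring
    · intro hN
      rcases (mem_Nspl_iff hodd g).mp hN with ⟨h1, h2⟩ | ⟨h1, h2⟩
      · rw [e10] at h2; exact (mul_ne_zero hx.2 hu.1) h2
      · rw [e00] at h1; exact (mul_ne_zero hx.1 hu.1) h1
  · -- a antidiag, b antidiag
    rw [ha1, ha2] at hda; rw [hb1, hb2] at hdb
    have hx : (a : Mat) 0 1 ≠ 0 ∧ (a : Mat) 1 0 ≠ 0 := by
      rw [← mul_ne_zero_iff]; intro h; apply hda; rw [h]; ring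
    have hu : (b : Mat) 0 1 ≠ 0 ∧ (b : Mat) 1 0 ≠ 0 := by
      rw [← mul_ne_zero_iff]; intro h; apply hdb; rw [h]; ring
    rw [Matrix.eta_fin_two ((a : GL2 p) : Mat), Matrix.eta_fin_two ((b : GL2 p) : Mat),
      ha1, ha2, hb1, hb2] at heq
    have e00 : (g : Mat) 0 0 = (a : Mat) 0 1 * t * (b : Mat) 1 0 := by
      rw [heq]; simp [Matrix.mul_apply, Fin.sum_univ_two]
    have e01 : (g : Mat) 0 1 = (a : Mat) 0 1 * (b : Mat) 0 1 := by
      rw [heq]; simp [Matrix.mul_apply, Fin.sum_univ_two]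
    have e10 : (g : Mat) 1 0 = (a : Mat) 1 0 * (b : Mat) 1 0 := by
      rw [heq]; simp [Matrix.mul_apply, Fin.sum_univ_two]
    have e11 : (g : Mat) 1 1 = (a : Mat) 1 0 * (b : Mat) 0 1 := by
      rw [heq]; simp [Matrix.mul_apply, Fin.sum_univ_two]
    constructor
    · left; rw [e00, e01, e10, e11]; ring
    · intro hN
      rcases (mem_Nspl_iff hodd g).mp hN with ⟨h1, h2⟩ | ⟨h1, h2⟩
      · rw [e01] at h1; exact (mul_ne_zero hx.1 hu.1) h1
      · rw [e11] at h2; exact (mul_ne_zero hx.2 hu.1) h2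

end Chen
end Aux4
section Aux5
namespace Chen

variable {p : ℕ} [Fact p.Prime]

local notation "Mat" => Matrix (Fin 2) (Fin 2) (ZMod p)

lemma mem_dosetN_of_cond (hodd : Odd p) {g : GL2 p} {t : ZMod p} (hN : g ∉ Nspl p)
    (hcond : (g : Mat) 0 0 * (g : Mat) 1 1 = t * ((g : Mat) 0 1 * (g : Mat) 1 0) ∨
             t * ((g : Mat) 0 0 * (g : Mat) 1 1) = (g : Mat) 0 1 * (g : Mat) 1 0) :
    g ∈ dosetN p t := by
  have hdet := det_entries_ne_zero g
  have hMg : (g : Mat) = !![(g : Mat) 0 0, (g : Mat) 0 1; (g : Mat) 1 0, (g : Mat) 1 1] :=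
    Matrix.eta_fin_two _
  have hN1 : ¬((g : Mat) 0 1 = 0 ∧ (g : Mat) 1 0 = 0) :=
    fun h => hN ((mem_Nspl_iff hodd g).mpr (Or.inl h))
  have hN2 : ¬((g : Mat) 0 0 = 0 ∧ (g : Mat) 1 1 = 0) :=
    fun h => hN ((mem_Nspl_iff hodd g).mpr (Or.inr h))
  rcases hcond with hcond | hcond
  · -- a*d = t*(b*c)
    have hb : (g : Mat) 0 1 ≠ 0 := by
      intro h0; apply hdet; rw [h0] at hcond ⊢; rw [hcond]; ring
    have hc : (g : Mat) 1 0 ≠ 0 := by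
      intro h0; apply hdet; rw [h0] at hcond ⊢; rw [hcond]; ring
    by_cases ha : (g : Mat) 0 0 ≠ 0
    · -- construction DD
      refine dosetN_of_eq
        (mkGL !![(g : Mat) 0 0, 0; 0, (g : Mat) 1 0]
          (by simp [Matrix.det_fin_two_of]; exact ⟨ha, hc⟩))
        (mkGL !![1, 0; 0, (g : Mat) 0 1 * ((g : Mat) 0 0)⁻¹]
          (by simp [Matrix.det_fin_two_of]; exact ⟨hb, ha⟩))
        ((mem_Nspl_iff hodd _).mpr (Or.inl (by simp)))
        ((mem_Nspl_iff hodd _).mpr (Or.inl (by simp))) g ?_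
      rw [coe_mkGL, coe_mkGL]
      rw [Matrix.mul_fin_two, Matrix.mul_fin_two, hMg]
      ext i j
      fin_cases i <;> fin_cases j <;> simp
      · field_simp
      · field_simp
        linear_combination hcond
    · push_neg at ha
      have hd : (g : Mat) 1 1 ≠ 0 := fun h0 => hN2 ⟨ha, h0⟩
      have ht : t = 0 := by
        rw [ha] at hcond
        have : t * ((g : Mat) 0 1 * (g : Mat) 1 0) = 0 := by rw [← hcond]; ring
        rcases mul_eq_zero.mp this with h | h
        · exact h
        · exact absurd h (mul_ne_zero hb hc)
      subst ht
      -- construction AA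
      refine dosetN_of_eq
        (mkGL !![0, (g : Mat) 0 1; (g : Mat) 1 1, 0]
          (by simp [Matrix.det_fin_two_of]; exact ⟨hb, hd⟩))
        (mkGL !![0, 1; (g : Mat) 1 0 * ((g : Mat) 1 1)⁻¹, 0]
          (by simp [Matrix.det_fin_two_of]; exact ⟨hc, hd⟩))
        ((mem_Nspl_iff hodd _).mpr (Or.inr (by simp)))
        ((mem_Nspl_iff hodd _).mpr (Or.inr (by simp))) g ?_
      rw [coe_mkGL, coe_mkGL]
      rw [Matrix.mul_fin_two, Matrix.mul_fin_two, hMg]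
      ext i j
      fin_cases i <;> fin_cases j <;> simp [ha]
      field_simp
  · -- t*(a*d) = b*c
    have ha : (g : Mat) 0 0 ≠ 0 := by
      intro h0; apply hdet; rw [h0] at hcond ⊢; rw [← hcond]; ring
    have hd : (g : Mat) 1 1 ≠ 0 := by
      intro h0; apply hdet; rw [h0] at hcond ⊢; rw [← hcond]; ring
    by_cases hb : (g : Mat) 0 1 ≠ 0
    · -- construction DA
      refine dosetN_of_eq
        (mkGL !![(g : Mat) 0 1, 0; 0, (g : Mat) 1 1]
          (by simp [Matrix.det_fin_two_of]; exact ⟨hb, hd⟩))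
        (mkGL !![0, 1; (g : Mat) 0 0 * ((g : Mat) 0 1)⁻¹, 0]
          (by simp [Matrix.det_fin_two_of]; exact ⟨ha, hb⟩))
        ((mem_Nspl_iff hodd _).mpr (Or.inl (by simp)))
        ((mem_Nspl_iff hodd _).mpr (Or.inr (by simp))) g ?_
      rw [coe_mkGL, coe_mkGL]
      rw [Matrix.mul_fin_two, Matrix.mul_fin_two, hMg]
      ext i j
      fin_cases i <;> fin_cases j <;> simp
      · field_simp
      · field_simp
        linear_combination (-1 : ZMod p) * hcond
    · push_neg at hb
      have hcc : (g : Mat) 1 0 ≠ 0 := fun h0 => hN1 ⟨hb, h0⟩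
      have ht : t = 0 := by
        rw [hb] at hcond
        have : t * ((g : Mat) 0 0 * (g : Mat) 1 1) = 0 := by rw [hcond]; ring
        rcases mul_eq_zero.mp this with h | h
        · exact h
        · exact absurd h (mul_ne_zero ha hd)
      subst ht
      -- construction AD
      refine dosetN_of_eq
        (mkGL !![0, (g : Mat) 0 0; (g : Mat) 1 0, 0]
          (by simp [Matrix.det_fin_two_of]; exact ⟨ha, hcc⟩))
        (mkGL !![1, 0; 0, (g : Mat) 1 1 * ((g : Mat) 1 0)⁻¹]
          (by simp [Matrix.det_fin_two_of]; exact ⟨hd, hcc⟩))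
        ((mem_Nspl_iff hodd _).mpr (Or.inr (by simp)))
        ((mem_Nspl_iff hodd _).mpr (Or.inl (by simp))) g ?_
      rw [coe_mkGL, coe_mkGL]
      rw [Matrix.mul_fin_two, Matrix.mul_fin_two, hMg]
      ext i j
      fin_cases i <;> fin_cases j <;> simp [hb]
      field_simp

end Chen
end Aux5
section Aux6
namespace Chen

variable {p : ℕ} [Fact p.Prime]

local notation "Mat" => Matrix (Fin 2) (Fin 2) (ZMod p)

lemma exists_tau (hodd : Odd p) {g : GL2 p} (hN : g ∉ Nspl p) :
    ∃ τ : ZMod p, τ ≠ 1 ∧ (∀ t, (t = τ ∨ t = τ⁻¹) → g ∈ dosetN p t) ∧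
      (∀ t, g ∈ dosetN p t → (t = τ ∨ t = τ⁻¹)) := by
  have hdet := det_entries_ne_zero g
  by_cases hbc : (g : Mat) 0 1 * (g : Mat) 1 0 = 0
  · have had : (g : Mat) 0 0 * (g : Mat) 1 1 ≠ 0 := by
      intro h; apply hdet; rw [h, hbc]; ring
    refine ⟨0, fun h => one_ne_zero h.symm, ?_, ?_⟩
    · intro t ht
      have ht0 : t = 0 := by rcases ht with h | h; exact h; simpa using h
      subst ht0
      exact mem_dosetN_of_cond hodd hN (Or.inr (by rw [hbc]; ring))
    · intro t htd
      rcases (dosetN_inv_rel hodd htd).1 with h | h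
      · exfalso; apply had; rw [h, hbc]; ring
      · left
        have := h.trans hbc
        rcases mul_eq_zero.mp this with h0 | h0
        · exact h0
        · exact absurd h0 had
  · by_cases had : (g : Mat) 0 0 * (g : Mat) 1 1 = 0
    · refine ⟨0, fun h => one_ne_zero h.symm, ?_, ?_⟩
      · intro t ht
        have ht0 : t = 0 := by rcases ht with h | h; exact h; simpa using h
        subst ht0
        exact mem_dosetN_of_cond hodd hN (Or.inl (by rw [had]; ring))
      · intro t htd
        rcases (dosetN_inv_rel hodd htd).1 with h | h
        · left
          rw [had] at h
          rcases mul_eq_zero.mp h.symm with h0 | h0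
          · exact h0
          · exact absurd h0 hbc
        · exfalso; apply hbc; rw [← h, had]; ring
    · refine ⟨(g : Mat) 0 0 * (g : Mat) 1 1 * ((g : Mat) 0 1 * (g : Mat) 1 0)⁻¹,
        ?_, ?_, ?_⟩
      · intro h1
        apply hdet
        field_simp at h1
        rw [div_eq_one_iff_eq hbc] at h1
        rw [h1]; ring
      · intro t ht
        rcases ht with h | h
        · subst h
          refine mem_dosetN_of_cond hodd hN (Or.inl ?_)
          field_simp
          rw [eq_div_iff hbc]; ring
        · subst h
          refine mem_dosetN_of_cond hodd hN (Or.inr ?_)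
          rw [mul_inv, inv_inv, mul_inv]
          field_simp
          rw [div_eq_iff had]; ring
      · intro t htd
        rcases (dosetN_inv_rel hodd htd).1 with h | h
        · left
          rw [eq_mul_inv_iff_mul_eq₀ hbc]
          linear_combination (-1 : ZMod p) * h
        · right
          rw [mul_inv, inv_inv, mul_inv]
          rw [← mul_inv, inv_mul_eq_div, eq_div_iff had]
          linear_combination h

end Chen
end Aux6
section Aux7
namespace Chen

variable {p : ℕ} [Fact p.Prime]

lemma dosetN_mul_mem {t : ZMod p} {s : GL2 p} (hs : s ∈ dosetN p t) {n : GL2 p}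
    (hn : n ∈ Nspl p) : s * n ∈ dosetN p t := by
  obtain ⟨a, ha, b, hb, h⟩ := hs
  refine ⟨a, ha, b * n, mul_mem hb hn, ?_⟩
  rw [show a⁻¹ * (s * n) * (b * n)⁻¹ = a⁻¹ * s * b⁻¹ by group]
  exact h

set_option synthInstance.maxHeartbeats 1000000 in
lemma mem_image_iff {S : Set (GL2 p)} (hS : ∀ s ∈ S, ∀ n ∈ Nspl p, s * n ∈ S)
    (g : GL2 p) (c : GL2 p ⧸ Nspl p) :
    (c ∈ QuotientGroup.mk '' (g • S)) ↔ g⁻¹ * Quotient.out c ∈ S := by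
  constructor
  · rintro ⟨y, ⟨s, hs, rfl⟩, hyc⟩
    have hmem : (g * s)⁻¹ * Quotient.out c ∈ Nspl p := by
      rw [← QuotientGroup.eq, QuotientGroup.out_eq']
      exact hyc
    have h2 : g⁻¹ * Quotient.out c = s * ((g * s)⁻¹ * Quotient.out c) := by group
    rw [h2]
    exact hS s hs _ hmem
  · intro h
    refine ⟨g * (g⁻¹ * Quotient.out c), Set.smul_mem_smul_set h, ?_⟩
    show QuotientGroup.mk (g * (g⁻¹ * Quotient.out c)) = c
    rw [show g * (g⁻¹ * Quotient.out c) = Quotient.out c by group, QuotientGroup.out_eq']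

lemma indicator_partition (hodd : Odd p) (Tr : Finset (ZMod p))
    (hTr1 : ∀ t ∈ Tr, t ≠ 1)
    (hTr2 : ∀ s : ZMod p, s ≠ 1 → ∃! t, t ∈ Tr ∧ (t = s ∨ t = s⁻¹))
    (h : GL2 p) :
    ((if h ∈ (Nspl p : Set (GL2 p)) then (1 : ℤ) else 0) +
      ∑ t ∈ Tr, (if h ∈ dosetN p t then (1 : ℤ) else 0)) = 1 := by
  simp only [SetLike.mem_coe]
  by_cases hN : h ∈ Nspl p
  · rw [if_pos hN, Finset.sum_eq_zero, add_zero]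
    intro t ht
    rw [if_neg]
    intro hd
    exact (dosetN_inv_rel hodd hd).2 hN
  · rw [if_neg hN, zero_add]
    obtain ⟨τ, hτ1, hex, huniq⟩ := exists_tau hodd hN
    obtain ⟨t₀, ⟨ht₀Tr, ht₀⟩, hun⟩ := hTr2 τ hτ1
    rw [Finset.sum_eq_single t₀]
    · rw [if_pos (hex t₀ ht₀)]
    · intro t ht hne
      rw [if_neg]
      intro hd
      exact hne (hun t ⟨ht, huniq t hd⟩)
    · intro h₀
      exact absurd ht₀Tr h₀

end Chen
end Aux7



open Chen in
/-- **Lemma 8.5.** In `ℤ[N\\G/N]`, the composite operator `NG × GN` (through `ℤ[G/G]`) equals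
`N + Σ_t Nσ_tN`, the sum over representatives `t` of all classes `t ∼ t⁻¹` in `𝔽_p ∖ {1}`. -/
theorem NG_GN_op_decomposition (p : ℕ) [Fact p.Prime] (hodd : Odd p)
    (Tr : Finset (ZMod p))
    (hTr1 : ∀ t ∈ Tr, t ≠ 1)
    (hTr2 : ∀ s : ZMod p, s ≠ 1 → ∃! t, t ∈ Tr ∧ (t = s ∨ t = s⁻¹)) :
    (T ℤ ((⊤ : Subgroup (GL2 p))) (Nspl p) ((((⊤ : Subgroup (GL2 p)) : Set (GL2 p)) * (Nspl p : Set (GL2 p))))).comp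
      (T ℤ (Nspl p) ((⊤ : Subgroup (GL2 p))) (((Nspl p : Set (GL2 p)) * ((⊤ : Subgroup (GL2 p)) : Set (GL2 p))))) =
    T ℤ (Nspl p) (Nspl p) ((Nspl p : Set (GL2 p))) + ∑ t ∈ Tr, T ℤ (Nspl p) (Nspl p) (dosetN p t) := by

  haveI : Subsingleton (GL2 p ⧸ (⊤ : Subgroup (GL2 p))) :=
    QuotientGroup.subsingleton_quotient_top
  have hset1 : ((Nspl p : Set (GL2 p)) * ((⊤ : Subgroup (GL2 p)) : Set (GL2 p))) = Set.univ := by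
    rw [Subgroup.coe_top]
    exact Set.mul_univ_of_one_mem (one_mem (Nspl p))
  have hset2 : (((⊤ : Subgroup (GL2 p)) : Set (GL2 p)) * (Nspl p : Set (GL2 p))) = Set.univ := by
    rw [Subgroup.coe_top]
    exact Set.univ_mul_of_one_mem (one_mem (Nspl p))
  apply LinearMap.ext
  intro v
  funext c
  rw [LinearMap.comp_apply]
  simp only [T, LinearMap.coe_mk, AddHom.coe_mk, LinearMap.add_apply, LinearMap.coe_sum,
    Finset.sum_apply, Pi.add_apply]
  rw [hset1, hset2]
  simp only [Set.smul_set_univ, Set.image_univ,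
    Set.range_eq_univ.mpr (QuotientGroup.mk_surjective), Set.mem_univ, if_true, mul_one]
  rw [Fintype.sum_subsingleton _ ((1 : GL2 p) : GL2 p ⧸ (⊤ : Subgroup (GL2 p)))]
  -- now LHS = ∑ e, v e
  rw [Finset.sum_comm, ← Finset.sum_add_distrib]
  apply Finset.sum_congr rfl
  intro e _
  simp only [mem_image_iff (fun s hs n hn => mul_mem hs hn) (Quotient.out e) c,
    mem_image_iff (fun s hs n hn => dosetN_mul_mem hs hn) (Quotient.out e) c]
  rw [← Finset.mul_sum, ← mul_add,
    indicator_partition hodd Tr hTr1 hTr2 ((Quotient.out e)⁻¹ * Quotient.out c), mul_one]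
end
end
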